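/- Let F = F̄·D where F̄ = (I − MR)^T ⊗_b (I − MR) with I − MR block-diagonal Hermitian, and D any matrix. Then ρ(F) ≤ ρ(I − MR)² · ‖D‖_{b,∞}, and consequently ρ(F) < 1 whenever ρ(I − MR) < 1/√(‖D‖_{b,∞}). -/

import Mathlib

open Matrix Kronecker

/-- Block maximum norm of a block vector. -/
noncomputable def bvecNorm {o m : Type*} [Fintype o] [Fintype m]
    (x : o × m → ℂ) : ℝ :=
  ⨆ k : o, Real.sqrt (∑ j : m, ‖x (k, j)‖ ^ 2)

/-- Block maximum norm of a matrix: the norm induced by the block maximum vector norm. -/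
noncomputable def bmatNorm {o m : Type*} [Fintype o] [Fintype m]
    (Y : Matrix (o × m) (o × m) ℂ) : ℝ :=
  sSup {c : ℝ | ∃ x : o × m → ℂ, bvecNorm x ≤ 1 ∧ c = bvecNorm (Y.mulVec x)}

/-- Block Kronecker (Tracy–Singh) product of two `M×M`-block-partitioned matrices:
the block in position `((i,k),(j,l))` is `A_{ij} ⊗ B_{kl}`. -/
def blockKron {N M : ℕ} (A B : Matrix (Fin N × Fin M) (Fin N × Fin M) ℂ) :
    Matrix ((Fin N × Fin N) × (Fin M × Fin M)) ((Fin N × Fin N) × (Fin M × Fin M)) ℂ :=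
  fun p q => A (p.1.1, p.2.1) (q.1.1, q.2.1) * B (p.1.2, p.2.2) (q.1.2, q.2.2)

/-!
The block maximum norm `‖·‖_{b,∞}` is the operator norm of a matrix acting on `ℓ^∞`-sums of
Euclidean blocks, so it dominates the spectral radius and is submultiplicative:
`ρ(F) ≤ ‖F̄‖_{b,∞} ‖D‖_{b,∞}`. As `S` is block diagonal with blocks `Sₖ`, so is `F̄ = Sᵀ ⊗_b S`,
with diagonal blocks `Sᵢᵀ ⊗ Sₖ`; hence `‖F̄‖_{b,∞} ≤ maxᵢₖ ‖Sᵢ‖₂ ‖Sₖ‖₂`, and the spectral norm of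
a Hermitian block is `‖Sₖ‖₂ = ρ(Sₖ) ≤ ρ(S)`.
-/

open WithLp
open scoped ENNReal

namespace Matrix

section BlockDiagonalFst

variable {o m α : Type*} [DecidableEq o]

def blockDiagonalFst [Zero α] (B : o → Matrix m m α) : Matrix (o × m) (o × m) α :=
  reindex (Equiv.prodComm m o) (Equiv.prodComm m o) (blockDiagonal B)

theorem blockDiagonalFst_apply [Zero α] (B : o → Matrix m m α) (k k' : o) (i j : m) :
    blockDiagonalFst B (k, i) (k', j) = if k = k' then B k i j else 0 := by
  simp [blockDiagonalFst, blockDiagonal_apply]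

theorem sum_single_kronecker_eq_blockDiagonalFst [Fintype o] [CommSemiring α]
    (B : o → Matrix m m α) : ∑ k, single k k (1 : α) ⊗ₖ B k = blockDiagonalFst B := by
  ext ⟨k, i⟩ ⟨k', j⟩
  rcases eq_or_ne k k' with rfl | h
  · simp [blockDiagonalFst_apply, sum_apply, single_apply]
  · simp only [blockDiagonalFst_apply, sum_apply, kroneckerMap_apply, single_apply, if_neg h]
    exact Finset.sum_eq_zero fun c _ => by
      rw [if_neg fun hc : c = k ∧ c = k' => h (hc.1.symm.trans hc.2), zero_mul]

theorem blockDiagonalFst_transpose [Zero α] (B : o → Matrix m m α) :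
    (blockDiagonalFst B)ᵀ = blockDiagonalFst fun k => (B k)ᵀ := by
  simp [blockDiagonalFst, blockDiagonal_transpose]

theorem blockDiagonalFst_mulVec_apply [Fintype o] [Fintype m] [NonUnitalNonAssocSemiring α]
    (B : o → Matrix m m α) (x : o × m → α) (k : o) (i : m) :
    (blockDiagonalFst B *ᵥ x) (k, i) = (B k *ᵥ fun j => x (k, j)) i := by
  simp [mulVec, dotProduct, Fintype.sum_prod_type, blockDiagonalFst_apply]

theorem spectrum_subset_spectrum_blockDiagonalFst [Fintype o] [Fintype m] [DecidableEq m]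
    {K : Type*} [Field K] (B : o → Matrix m m K) (k : o) :
    spectrum K (B k) ⊆ spectrum K (blockDiagonalFst B) := by
  intro μ hμ
  rw [blockDiagonalFst, ← coe_reindexAlgEquiv K K, AlgEquiv.spectrum_eq]
  rw [spectrum.mem_iff, isUnit_iff_isUnit_det, isUnit_iff_ne_zero, not_not] at hμ ⊢
  have hdiag : algebraMap K (Matrix (m × o) (m × o) K) μ - blockDiagonal B =
      blockDiagonal fun k => algebraMap K _ μ - B k := by
    simp only [Algebra.algebraMap_eq_smul_one]
    rw [← blockDiagonal_one, ← blockDiagonal_smul, ← blockDiagonal_sub]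
    rfl
  rw [hdiag, det_blockDiagonal]
  exact Finset.prod_eq_zero (Finset.mem_univ k) hμ

end BlockDiagonalFst

theorem kronecker_mulVec_apply {α l m n p : Type*} [Fintype m] [Fintype p] [Semiring α]
    (A : Matrix l m α) (B : Matrix n p α) (v : m × p → α) (i : l) (k : n) :
    ((A ⊗ₖ B) *ᵥ v) (i, k) = (A *ᵥ fun j => (B *ᵥ fun j' => v (j, j')) k) i := by
  simp only [mulVec, dotProduct, kroneckerMap_apply, Fintype.sum_prod_type, Finset.mul_sum,
    mul_assoc]

section L2OpNorm

open scoped Matrix.Norms.L2Operator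

variable {𝕜 m n : Type*} [RCLike 𝕜] [Fintype m] [Fintype n] [DecidableEq n]

theorem l2_opNorm_le_of_mulVec_le {A : Matrix m n 𝕜} {c : ℝ} (hc : 0 ≤ c)
    (h : ∀ x : n → 𝕜, ‖toLp 2 (A *ᵥ x)‖ ≤ c * ‖toLp 2 x‖) : ‖A‖ ≤ c := by
  rw [l2_opNorm_def]
  exact ContinuousLinearMap.opNorm_le_bound _ hc fun x => h x.ofLp

theorem sum_norm_mulVec_sq_le (A : Matrix m n 𝕜) (x : n → 𝕜) :
    ∑ i, ‖(A *ᵥ x) i‖ ^ 2 ≤ ‖A‖ ^ 2 * ∑ j, ‖x j‖ ^ 2 := by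
  have h := pow_le_pow_left₀ (norm_nonneg _) (A.l2_opNorm_mulVec (toLp 2 x)) 2
  simpa [mul_pow, EuclideanSpace.norm_sq_eq] using h

theorem l2_opNorm_transpose_le [DecidableEq m] (A : Matrix m n 𝕜) : ‖Aᵀ‖ ≤ ‖A‖ := by
  refine l2_opNorm_le_of_mulVec_le (norm_nonneg _) fun x => ?_
  have hx : Aᵀ *ᵥ x = star (Aᴴ *ᵥ star x) := by
    rw [star_mulVec, star_star, conjTranspose_conjTranspose, mulVec_transpose]
  have h := l2_opNorm_mulVec Aᴴ (toLp 2 (star x))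
  simp only [hx, EuclideanSpace.norm_eq, l2_opNorm_conjTranspose] at h ⊢
  simpa using h

theorem l2_opNorm_transpose [DecidableEq m] (A : Matrix m n 𝕜) : ‖Aᵀ‖ = ‖A‖ :=
  le_antisymm (l2_opNorm_transpose_le A) (by simpa using l2_opNorm_transpose_le Aᵀ)

omit [DecidableEq n] in
theorem l2_opNorm_kronecker_le {m' n' : Type*} [Fintype m'] [Fintype n'] [DecidableEq m']
    [DecidableEq n'] (A : Matrix m m' 𝕜) (B : Matrix n n' 𝕜) : ‖A ⊗ₖ B‖ ≤ ‖A‖ * ‖B‖ := by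
  refine l2_opNorm_le_of_mulVec_le (by positivity) fun v => le_of_sq_le_sq ?_ (by positivity)
  let W : n → m' → 𝕜 := fun k j => (B *ᵥ fun j' => v (j, j')) k
  calc ‖toLp 2 ((A ⊗ₖ B) *ᵥ v)‖ ^ 2 = ∑ k, ∑ i, ‖(A *ᵥ W k) i‖ ^ 2 := by
        simp only [EuclideanSpace.norm_sq_eq, Fintype.sum_prod_type, kronecker_mulVec_apply]
        exact Finset.sum_comm
    _ ≤ ∑ k, ‖A‖ ^ 2 * ∑ j, ‖W k j‖ ^ 2 :=
        Finset.sum_le_sum fun k _ => sum_norm_mulVec_sq_le A (W k)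
    _ = ‖A‖ ^ 2 * ∑ j, ∑ k, ‖(B *ᵥ fun j' => v (j, j')) k‖ ^ 2 := by
        rw [← Finset.mul_sum, Finset.sum_comm]
    _ ≤ ‖A‖ ^ 2 * ∑ j, ‖B‖ ^ 2 * ∑ j', ‖v (j, j')‖ ^ 2 := by
        gcongr with j
        exact sum_norm_mulVec_sq_le B _
    _ = (‖A‖ * ‖B‖ * ‖toLp 2 v‖) ^ 2 := by
        simp only [EuclideanSpace.norm_sq_eq, mul_pow, Fintype.sum_prod_type, ← Finset.mul_sum]
        ring

theorem IsHermitian.ofReal_l2_opNorm_eq_spectralRadius {A : Matrix n n ℂ} (hA : A.IsHermitian) :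
    ENNReal.ofReal ‖A‖ = spectralRadius ℂ A := by
  rw [hA.isSelfAdjoint.spectralRadius_eq_nnnorm, ← ENNReal.ofReal_coe_nnreal, coe_nnnorm]

end L2OpNorm

section Spectrum

variable {n : Type*} [Fintype n] [DecidableEq n]

theorem exists_mulVec_eq_smul_of_mem_spectrum {K : Type*} [Field K] {A : Matrix n n K} {μ : K}
    (h : μ ∈ spectrum K A) : ∃ v ≠ 0, A *ᵥ v = μ • v := by
  rw [← spectrum_toLin', ← Module.End.hasEigenvalue_iff_mem_spectrum] at h
  obtain ⟨v, hv⟩ := h.exists_hasEigenvector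
  exact ⟨v, hv.2, by simpa using hv.apply_eq_smul⟩

theorem spectralRadius_lt_top {𝕜 : Type*} [NormedField 𝕜] (A : Matrix n n 𝕜) :
    spectralRadius 𝕜 A < ⊤ := by
  obtain ⟨C, hC⟩ := (A.finite_spectrum.image (‖·‖₊)).bddAbove
  exact (iSup₂_le fun k hk => ENNReal.coe_le_coe.2 (hC ⟨k, hk, rfl⟩)).trans_lt ENNReal.coe_lt_top

end Spectrum

end Matrix

theorem spectralRadius_mono_of_spectrum_subset {𝕜 A B : Type*} [NormedField 𝕜] [Ring A] [Ring B]
    [Algebra 𝕜 A] [Algebra 𝕜 B] {a : A} {b : B} (h : spectrum 𝕜 a ⊆ spectrum 𝕜 b) :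
    spectralRadius 𝕜 a ≤ spectralRadius 𝕜 b :=
  biSup_mono h

section BlockNorm

variable {o m : Type*} [Fintype o] [Fintype m]

noncomputable def blockEquiv : (o × m → ℂ) ≃ₗ[ℂ] PiLp ∞ (fun _ : o => EuclideanSpace ℂ m) :=
  LinearEquiv.curry ℂ ℂ o m ≪≫ₗ
    LinearEquiv.piCongrRight (fun _ => (WithLp.linearEquiv 2 ℂ (m → ℂ)).symm) ≪≫ₗ
    (WithLp.linearEquiv ∞ ℂ _).symm

omit [Fintype o] [Fintype m] in
theorem blockEquiv_apply (x : o × m → ℂ) (k : o) :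
    blockEquiv x k = toLp 2 fun j => x (k, j) := rfl

theorem bvecNorm_eq_norm_blockEquiv (x : o × m → ℂ) : bvecNorm x = ‖blockEquiv x‖ := by
  rw [PiLp.norm_eq_ciSup, bvecNorm]
  simp [blockEquiv_apply, EuclideanSpace.norm_eq]

variable [DecidableEq o] [DecidableEq m]

noncomputable def blockOp (Y : Matrix (o × m) (o × m) ℂ) :
    PiLp ∞ (fun _ : o => EuclideanSpace ℂ m) →L[ℂ] PiLp ∞ (fun _ : o => EuclideanSpace ℂ m) :=
  -- without this, unification inside `toContinuousLinearMap` times out looking for it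
  haveI : ContinuousSMul ℂ (PiLp ∞ fun _ : o => EuclideanSpace ℂ m) := inferInstance
  LinearMap.toContinuousLinearMap (blockEquiv.conj (Matrix.toLin' Y))

theorem blockOp_blockEquiv (Y : Matrix (o × m) (o × m) ℂ) (x : o × m → ℂ) :
    blockOp Y (blockEquiv x) = blockEquiv (Y *ᵥ x) := by
  simp [blockOp]

theorem bmatNorm_eq_norm_blockOp (Y : Matrix (o × m) (o × m) ℂ) : bmatNorm Y = ‖blockOp Y‖ := by
  rw [← ContinuousLinearMap.sSup_unitClosedBall_eq_norm, bmatNorm]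
  congr 1
  ext c
  simp only [Set.mem_ofPred_eq, Set.mem_image, Metric.mem_closedBall, dist_zero_right,
    bvecNorm_eq_norm_blockEquiv]
  constructor
  · rintro ⟨x, hx, rfl⟩
    exact ⟨blockEquiv x, hx, by rw [blockOp_blockEquiv]⟩
  · rintro ⟨z, hz, rfl⟩
    refine ⟨blockEquiv.symm z, by simpa using hz, ?_⟩
    rw [← blockOp_blockEquiv, LinearEquiv.apply_symm_apply]

theorem bmatNorm_nonneg (Y : Matrix (o × m) (o × m) ℂ) : 0 ≤ bmatNorm Y := by
  rw [bmatNorm_eq_norm_blockOp]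
  exact norm_nonneg _

theorem bvecNorm_mulVec_le (Y : Matrix (o × m) (o × m) ℂ) (x : o × m → ℂ) :
    bvecNorm (Y *ᵥ x) ≤ bmatNorm Y * bvecNorm x := by
  simpa only [bvecNorm_eq_norm_blockEquiv, bmatNorm_eq_norm_blockOp, blockOp_blockEquiv] using
    (blockOp Y).le_opNorm (blockEquiv x)

theorem bmatNorm_le_of_bvecNorm_mulVec_le {Y : Matrix (o × m) (o × m) ℂ} {c : ℝ} (hc : 0 ≤ c)
    (h : ∀ x, bvecNorm (Y *ᵥ x) ≤ c * bvecNorm x) : bmatNorm Y ≤ c := by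
  rw [bmatNorm_eq_norm_blockOp]
  refine (blockOp Y).opNorm_le_bound hc fun z => ?_
  have hz := h (blockEquiv.symm z)
  rwa [bvecNorm_eq_norm_blockEquiv, bvecNorm_eq_norm_blockEquiv, ← blockOp_blockEquiv,
    LinearEquiv.apply_symm_apply] at hz

theorem bmatNorm_mul_le (X Y : Matrix (o × m) (o × m) ℂ) :
    bmatNorm (X * Y) ≤ bmatNorm X * bmatNorm Y := by
  refine bmatNorm_le_of_bvecNorm_mulVec_le
    (mul_nonneg (bmatNorm_nonneg X) (bmatNorm_nonneg Y)) fun x => ?_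
  rw [← Matrix.mulVec_mulVec, mul_assoc]
  exact (bvecNorm_mulVec_le X _).trans
    (mul_le_mul_of_nonneg_left (bvecNorm_mulVec_le Y x) (bmatNorm_nonneg X))

theorem spectralRadius_le_bmatNorm (Y : Matrix (o × m) (o × m) ℂ) :
    spectralRadius ℂ Y ≤ ENNReal.ofReal (bmatNorm Y) := by
  refine iSup₂_le fun μ hμ => ?_
  obtain ⟨v, hv0, hv⟩ := Matrix.exists_mulVec_eq_smul_of_mem_spectrum hμ
  have hpos : 0 < ‖blockEquiv v‖ := norm_pos_iff.2 ((LinearEquiv.map_ne_zero_iff _).2 hv0)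
  have hle : ‖μ‖ * ‖blockEquiv v‖ ≤ bmatNorm Y * ‖blockEquiv v‖ := by
    simpa [hv, bvecNorm_eq_norm_blockEquiv, norm_smul] using bvecNorm_mulVec_le Y v
  rw [← ENNReal.ofReal_coe_nnreal, coe_nnnorm]
  exact ENNReal.ofReal_le_ofReal (le_of_mul_le_mul_right hle hpos)

section L2OpNorm

open scoped Matrix.Norms.L2Operator

theorem bmatNorm_blockDiagonalFst_le {B : o → Matrix m m ℂ} {c : ℝ} (hc : 0 ≤ c)
    (hB : ∀ k, ‖B k‖ ≤ c) : bmatNorm (Matrix.blockDiagonalFst B) ≤ c := by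
  refine bmatNorm_le_of_bvecNorm_mulVec_le hc fun x => ?_
  rw [bvecNorm_eq_norm_blockEquiv, bvecNorm_eq_norm_blockEquiv, PiLp.norm_eq_ciSup]
  refine Real.iSup_le (fun k => ?_) (by positivity)
  calc ‖blockEquiv (Matrix.blockDiagonalFst B *ᵥ x) k‖
      = ‖toLp 2 (B k *ᵥ blockEquiv x k)‖ := by
        simp only [blockEquiv_apply, Matrix.blockDiagonalFst_mulVec_apply]
    _ ≤ ‖B k‖ * ‖blockEquiv x k‖ := (B k).l2_opNorm_mulVec _
    _ ≤ c * ‖blockEquiv x‖ := by gcongr; exacts [hB k, PiLp.norm_apply_le _ _]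

theorem l2_opNorm_le_toReal_spectralRadius_blockDiagonalFst {B : o → Matrix m m ℂ}
    (hB : ∀ k, (B k).IsHermitian) (k : o) :
    ‖B k‖ ≤ (spectralRadius ℂ (Matrix.blockDiagonalFst B)).toReal := by
  rw [← ENNReal.ofReal_le_iff_le_toReal (Matrix.spectralRadius_lt_top _).ne,
    (hB k).ofReal_l2_opNorm_eq_spectralRadius]
  exact spectralRadius_mono_of_spectrum_subset
    (Matrix.spectrum_subset_spectrum_blockDiagonalFst B k)

end L2OpNorm

end BlockNorm

theorem blockKron_blockDiagonalFst {N M : ℕ} (A B : Fin N → Matrix (Fin M) (Fin M) ℂ) :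
    blockKron (Matrix.blockDiagonalFst A) (Matrix.blockDiagonalFst B) =
      Matrix.blockDiagonalFst fun p : Fin N × Fin N => A p.1 ⊗ₖ B p.2 := by
  ext ⟨⟨i, k⟩, m₁, m₂⟩ ⟨⟨j, l⟩, m₁', m₂'⟩
  simp only [blockKron, Matrix.blockDiagonalFst_apply, kroneckerMap_apply, Prod.mk.injEq]
  split_ifs <;> simp_all

open scoped Matrix.Norms.L2Operator in
theorem bmatNorm_blockKron_transpose_le {N M : ℕ} {B : Fin N → Matrix (Fin M) (Fin M) ℂ}
    (hB : ∀ k, (B k).IsHermitian) :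
    bmatNorm (blockKron (Matrix.blockDiagonalFst B)ᵀ (Matrix.blockDiagonalFst B)) ≤
      (spectralRadius ℂ (Matrix.blockDiagonalFst B)).toReal ^ 2 := by
  rw [Matrix.blockDiagonalFst_transpose, blockKron_blockDiagonalFst]
  refine bmatNorm_blockDiagonalFst_le (sq_nonneg _) fun p => ?_
  have hR := l2_opNorm_le_toReal_spectralRadius_blockDiagonalFst hB
  calc _ ≤ ‖(B p.1)ᵀ‖ * ‖B p.2‖ := Matrix.l2_opNorm_kronecker_le _ _
    _ ≤ _ := by rw [Matrix.l2_opNorm_transpose, sq]; gcongr <;> exact hR _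

theorem ENNReal.sq_mul_ofReal_lt_one {a : ℝ≥0∞} {d : ℝ} (ha : a < ENNReal.ofReal (1 / √d)) :
    a ^ 2 * ENNReal.ofReal d < 1 := by
  rcases le_or_gt d 0 with hd | hd
  · simp [ENNReal.ofReal_of_nonpos hd]
  calc a ^ 2 * ENNReal.ofReal d < ENNReal.ofReal (1 / √d) ^ 2 * ENNReal.ofReal d := by
        gcongr
        exact ENNReal.ofReal_ne_top
    _ = 1 := by
        rw [← ENNReal.ofReal_pow (by positivity), ← ENNReal.ofReal_mul (by positivity), div_pow,
          one_pow, Real.sq_sqrt hd.le, one_div, inv_mul_cancel₀ hd.ne', ENNReal.ofReal_one]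

theorem mean_square_stability_bound_general
    {N M : ℕ} (Sb : Fin N → Matrix (Fin M) (Fin M) ℂ)
    (hHerm : ∀ k, (Sb k).IsHermitian)
    (S : Matrix (Fin N × Fin M) (Fin N × Fin M) ℂ)
    (hS : S = ∑ k : Fin N, (Matrix.single k k (1 : ℂ)) ⊗ₖ Sb k)
    (D F : Matrix ((Fin N × Fin N) × (Fin M × Fin M)) ((Fin N × Fin N) × (Fin M × Fin M)) ℂ)
    (hF : F = blockKron Sᵀ S * D) :
    spectralRadius ℂ F ≤ (spectralRadius ℂ S) ^ 2 * ENNReal.ofReal (bmatNorm D) ∧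
    (spectralRadius ℂ S < ENNReal.ofReal (1 / Real.sqrt (bmatNorm D)) →
      spectralRadius ℂ F < 1) := by
  rw [Matrix.sum_single_kronecker_eq_blockDiagonalFst] at hS
  have hFbar : bmatNorm (blockKron Sᵀ S) ≤ (spectralRadius ℂ S).toReal ^ 2 :=
    hS ▸ bmatNorm_blockKron_transpose_le hHerm
  have hρF : spectralRadius ℂ F ≤ (spectralRadius ℂ S) ^ 2 * ENNReal.ofReal (bmatNorm D) := calc
    spectralRadius ℂ F ≤ ENNReal.ofReal (bmatNorm F) := spectralRadius_le_bmatNorm F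
    _ ≤ ENNReal.ofReal ((spectralRadius ℂ S).toReal ^ 2 * bmatNorm D) := by
        rw [hF]
        gcongr
        exact (bmatNorm_mul_le _ _).trans (by gcongr; exact bmatNorm_nonneg D)
    _ ≤ (spectralRadius ℂ S) ^ 2 * ENNReal.ofReal (bmatNorm D) := by
        rw [ENNReal.ofReal_mul (sq_nonneg _), ENNReal.ofReal_pow ENNReal.toReal_nonneg]
        gcongr
        exact ENNReal.ofReal_toReal_le
  exact ⟨hρF, fun h => hρF.trans_lt (ENNReal.sq_mul_ofReal_lt_one h)⟩

/-- Mean-square stability: with `S = I − MR` block-diagonal Hermitian,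
`F̄ = Sᵀ ⊗_b S` and `F = F̄ D`, the spectral radius satisfies
`ρ(F) ≤ ρ(S)² ‖D‖_{b,∞}`, and `ρ(F) < 1` whenever `ρ(S) < 1/√‖D‖_{b,∞}`. -/
theorem mean_square_stability_bound
    {N M : ℕ} (Sb : Fin N → Matrix (Fin M) (Fin M) ℂ)
    (hHerm : ∀ k, (Sb k).IsHermitian)
    (S : Matrix (Fin N × Fin M) (Fin N × Fin M) ℂ)
    (hS : S = ∑ k : Fin N, (Matrix.single k k (1 : ℂ)) ⊗ₖ Sb k)
    (D F : Matrix ((Fin N × Fin N) × (Fin M × Fin M)) ((Fin N × Fin N) × (Fin M × Fin M)) ℂ)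
    (hD : 0 < bmatNorm D)
    (hF : F = blockKron Sᵀ S * D) :
    spectralRadius ℂ F ≤ (spectralRadius ℂ S) ^ 2 * ENNReal.ofReal (bmatNorm D) ∧
    (spectralRadius ℂ S < ENNReal.ofReal (1 / Real.sqrt (bmatNorm D)) →
      spectralRadius ℂ F < 1) :=
  mean_square_stability_bound_general Sb hHerm S hS D F hF
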